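/- arXiv:2305.19083 — 6 statements merged into one kernel-verified Lean document; each statement's English description precedes it below -/
import Mathlib

section
/- Let G be a connected undirected graph with nonnegative edge weights, let p* be a path from s to t, and let E' be a minimum-cost edge set (with positive removal costs) whose removal makes p* the shortest path from s to t. Then the graph (V, E \ E') remains connected. -/
open SimpleGraph

/-- Length of a walk with respect to edge weights `w`. -/
noncomputable def walkLen {V : Type*} {G : SimpleGraph V} (w : Sym2 V → ℝ) {s t : V}
    (p : G.Walk s t) : ℝ := (p.edges.map w).sum

/-- An attack: a set of edges of `G`, disjoint from the edges of the target path `p`,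
whose removal makes `p` a shortest `s`–`t` path. -/
def IsAttack {V : Type*} (G : SimpleGraph V) (w : Sym2 V → ℝ) {s t : V}
    (p : G.Walk s t) (E' : Finset (Sym2 V)) : Prop :=
  ↑E' ⊆ G.edgeSet ∧ (∀ e ∈ p.edges, e ∉ E') ∧
    ∀ q : (G.deleteEdges ↑E').Walk s t, q.IsPath → walkLen w p ≤ walkLen w q

/-!
If `G \ E'` were disconnected, some `e ∈ E'` would join two of its components, i.e. be a bridge
of `G \ (E' \ {e})`. Since `p` survives in `G \ E'`, the vertices `s` and `t` lie in one of these
components, so no `s`–`t` path of `G \ (E' \ {e})` can cross the bridge `e`: putting `e` back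
creates no new `s`–`t` path, and `E' \ {e}` is a cheaper attack.
-/

namespace SimpleGraph

variable {V : Type*} {G : SimpleGraph V}

theorem deleteEdges_sdiff_singleton_deleteEdges {s : Set (Sym2 V)} {e : Sym2 V} (he : e ∈ s) :
    (G.deleteEdges (s \ {e})).deleteEdges {e} = G.deleteEdges s := by
  rw [deleteEdges_deleteEdges, Set.sdiff_union_self, Set.union_singleton, Set.insert_eq_of_mem he]

theorem Connected.exists_isBridge_of_not_connected_deleteEdges (hG : G.Connected)
    {s : Set (Sym2 V)} (hs : ¬(G.deleteEdges s).Connected) :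
    ∃ e ∈ s, (G.deleteEdges (s \ {e})).IsBridge e := by
  have : Nonempty V := hG.nonempty
  obtain ⟨u, v, huv⟩ : ∃ u v, ¬(G.deleteEdges s).Reachable u v := by
    simpa [connected_iff, Preconnected] using hs
  obtain ⟨⟨⟨a, b⟩, hab⟩, -, ha, hb⟩ := (hG.preconnected u v).some.exists_boundary_dart
    {x | (G.deleteEdges s).Reachable u x} (Reachable.refl u) huv
  have hnab : ¬(G.deleteEdges s).Reachable a b := fun h => hb (ha.trans h)
  have habs : s(a, b) ∈ s := by
    by_contra habs
    exact hnab (deleteEdges_adj.mpr ⟨hab, habs⟩).reachable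
  refine ⟨s(a, b), habs, isBridge_iff.mpr ?_⟩
  rwa [deleteEdges_sdiff_singleton_deleteEdges habs]

theorem Walk.IsTrail.notMem_edges_of_isBridge {u v : V} {w : G.Walk u v} (hw : w.IsTrail)
    {e : Sym2 V} (he : G.IsBridge e) (huv : (G.deleteEdges {e}).Reachable u v) :
    e ∉ w.edges := by
  induction e with | h x y => ?_
  rw [isBridge_iff] at he
  by_cases hy : (G.deleteEdges {s(x, y)}).Reachable u y
  · have hx : ¬(G.deleteEdges {s(x, y)}).Reachable u x := fun hx => he (hx.symm.trans hy)
    rw [Sym2.eq_swap] at huv hx ⊢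
    exact hw.not_mem_edges_of_not_reachable hx fun h => hx (huv.trans h)
  · exact hw.not_mem_edges_of_not_reachable hy fun h => hy (huv.trans h)

end SimpleGraph

theorem walkLen_transfer {V : Type*} {G H : SimpleGraph V} (w : Sym2 V → ℝ) {s t : V}
    (q : G.Walk s t) (hq : ∀ e ∈ q.edges, e ∈ H.edgeSet) :
    walkLen w (q.transfer H hq) = walkLen w q := by
  simp only [walkLen, Walk.edges_transfer]

theorem IsAttack.erase_of_isBridge {V : Type*} [DecidableEq V] {G : SimpleGraph V}
    {w : Sym2 V → ℝ} {s t : V} {p : G.Walk s t} {E' : Finset (Sym2 V)} (hE' : IsAttack G w p E')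
    {e : Sym2 V} (he : e ∈ E') (hbridge : (G.deleteEdges (↑E' \ {e})).IsBridge e) :
    IsAttack G w p (E'.erase e) := by
  obtain ⟨hsub, hdisj, hshort⟩ := hE'
  refine ⟨(Finset.coe_subset.mpr (E'.erase_subset e)).trans hsub,
    fun f hf hfe => hdisj f hf (Finset.mem_of_mem_erase hfe), fun q hq => ?_⟩
  rw [← Finset.coe_erase] at hbridge
  have hdel : (G.deleteEdges ↑(E'.erase e)).deleteEdges {e} = G.deleteEdges ↑E' := by
    rw [Finset.coe_erase, deleteEdges_sdiff_singleton_deleteEdges (Finset.mem_coe.mpr he)]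
  have hst : ((G.deleteEdges ↑(E'.erase e)).deleteEdges {e}).Reachable s t :=
    hdel ▸ ⟨p.toDeleteEdges _ hdisj⟩
  have hqe : e ∉ q.edges := hq.isTrail.notMem_edges_of_isBridge hbridge hst
  have hq' : ∀ f ∈ q.edges, f ∈ (G.deleteEdges ↑E').edgeSet := fun f hf => by
    rw [← hdel, edgeSet_deleteEdges]
    exact ⟨q.edges_subset_edgeSet hf, fun h => hqe (Set.mem_singleton_iff.mp h ▸ hf)⟩
  rw [← walkLen_transfer w q hq']
  exact hshort _ (hq.transfer hq')

theorem stmt0_general {V : Type*} (G : SimpleGraph V) (hG : G.Connected)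
    (w : Sym2 V → ℝ)
    (c : Sym2 V → ℝ) (hc : ∀ e, 0 < c e)
    (s t : V) (p : G.Walk s t)
    (E' : Finset (Sym2 V)) (hE' : IsAttack G w p E')
    (hmin : ∀ F : Finset (Sym2 V), IsAttack G w p F → ∑ e ∈ E', c e ≤ ∑ e ∈ F, c e) :
    (G.deleteEdges ↑E').Connected := by
  classical
  by_contra hdisconn
  obtain ⟨e, he, hbridge⟩ := hG.exists_isBridge_of_not_connected_deleteEdges hdisconn
  have hcheaper : ∑ f ∈ E'.erase e, c f < ∑ f ∈ E', c f :=
    Finset.sum_erase_lt_of_pos he (hc e)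
  exact (hmin _ (hE'.erase_of_isBridge he hbridge)).not_gt hcheaper

/-- A minimum-cost attack (positive removal costs, nonnegative weights) never
disconnects a connected graph. -/
theorem stmt0 {V : Type*} [Fintype V] (G : SimpleGraph V) (hG : G.Connected)
    (w : Sym2 V → ℝ) (hw : ∀ e, 0 ≤ w e)
    (c : Sym2 V → ℝ) (hc : ∀ e, 0 < c e)
    (s t : V) (p : G.Walk s t) (hp : p.IsPath)
    (E' : Finset (Sym2 V)) (hE' : IsAttack G w p E')
    (hmin : ∀ F : Finset (Sym2 V), IsAttack G w p F → ∑ e ∈ E', c e ≤ ∑ e ∈ F, c e) :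
    (G.deleteEdges ↑E').Connected :=
  stmt0_general G hG w c hc s t p E' hE' hmin
end

section
/- In the triangle gadget {u_{i-1}, ω_i, u_i} with published weights w', a minimum-cost attack that makes the edge {u_{i-1}, u_i} the unique shortest path from u_{i-1} to u_i must remove exactly one of the edges {u_{i-1}, ω_i} or {ω_i, u_i} (incurring cost ν_i) if and only if w'({u_{i-1}, u_i}) ≥ w'({u_{i-1}, ω_i}) + w'({ω_i, u_i}); otherwise it removes no edge of the triangle. -/
open SimpleGraph

/-- An attack on the triangle gadget on vertices `0 = u_{i-1}`, `1 = ω_i`, `2 = u_i`: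
a set of removable edges (only the two detour edges `{0,1}` and `{1,2}` may be removed;
the target edge `{0,2}` is on `p*`) whose removal makes the direct edge `{0,2}` the
unique shortest path from `0` to `2`. -/
def IsTriAttack (w' : Sym2 (Fin 3) → ℝ) (E' : Finset (Sym2 (Fin 3))) : Prop :=
  ↑E' ⊆ ({s((0 : Fin 3), (1 : Fin 3)), s((1 : Fin 3), (2 : Fin 3))} : Set (Sym2 (Fin 3))) ∧
    ∀ q : ((⊤ : SimpleGraph (Fin 3)).deleteEdges ↑E').Walk 0 2, q.IsPath →
      q.edges ≠ [s((0 : Fin 3), (2 : Fin 3))] →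
      w' s((0 : Fin 3), (2 : Fin 3)) < walkLen w' q

/-! Every removable edge costs `ν`, so an attack costs `ν` times its size. Removing `{0,1}`
alone is always an attack, so a minimum attack has at most one edge; removing nothing is an
attack exactly when the detour through `1` is strictly longer than the direct edge. -/

lemma SimpleGraph.Walk.IsPath.edges_eq_of_fin_three {G : SimpleGraph (Fin 3)} {q : G.Walk 0 2}
    (hq : q.IsPath) :
    q.edges = [s(0, 2)] ∨ q.edges = [s(0, 1), s(1, 2)] := by
  cases q with
  | @cons _ b _ h q' =>
    obtain ⟨hq', h0⟩ := Walk.cons_isPath_iff _ _ |>.mp hq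
    fin_cases b
    · exact absurd rfl h.ne
    · cases q' with
      | @cons _ c _ h' r =>
        obtain ⟨hr, -⟩ := Walk.cons_isPath_iff _ _ |>.mp hq'
        fin_cases c
        · simp at h0
        · exact absurd rfl h'.ne
        · simp [Walk.isPath_iff_nil.mp hr |>.eq_nil]
    · simp [Walk.isPath_iff_nil.mp hq' |>.eq_nil]

namespace IsTriAttack

variable {w' : Sym2 (Fin 3) → ℝ}

lemma empty_iff :
    IsTriAttack w' ∅ ↔ w' s(0, 2) < w' s(0, 1) + w' s(1, 2) := by
  constructor
  · rintro ⟨-, hpaths⟩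
    let detour :
        ((⊤ : SimpleGraph (Fin 3)).deleteEdges ↑(∅ : Finset (Sym2 (Fin 3)))).Walk 0 2 :=
      .cons (v := 1) (by simp) (.cons (v := 2) (by simp) .nil)
    have hlt := hpaths detour (by simp [detour, Walk.isPath_def]) (by simp [detour])
    simpa [walkLen, detour] using hlt
  · refine fun hlt => ⟨by simp, fun q hq hne => ?_⟩
    rcases hq.edges_eq_of_fin_three with h | h
    · exact absurd h hne
    · simpa [walkLen, h] using hlt

lemma singleton_left : IsTriAttack w' {s(0, 1)} := by
  refine ⟨by simp, fun q hq hne => ?_⟩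
  rcases hq.edges_eq_of_fin_three with h | h
  · exact absurd h hne
  · have hmem := q.edges_subset_edgeSet (h ▸ List.mem_cons_self : s(0, 1) ∈ q.edges)
    simp at hmem

lemma sum_eq_card_mul {E' : Finset (Sym2 (Fin 3))} (hE' : IsTriAttack w' E')
    {c : Sym2 (Fin 3) → ℝ} {ν : ℝ} (hc1 : c s(0, 1) = ν) (hc2 : c s(1, 2) = ν) :
    ∑ e ∈ E', c e = E'.card * ν := by
  rw [Finset.sum_eq_card_nsmul (b := ν), nsmul_eq_mul]
  intro e he
  rcases hE'.1 he with rfl | rfl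
  exacts [hc1, hc2]

end IsTriAttack

theorem stmt3_general (w' : Sym2 (Fin 3) → ℝ) (ν : ℝ) (hν : 0 < ν)
    (c : Sym2 (Fin 3) → ℝ)
    (hc1 : c s((0 : Fin 3), (1 : Fin 3)) = ν) (hc2 : c s((1 : Fin 3), (2 : Fin 3)) = ν)
    (E' : Finset (Sym2 (Fin 3))) (hE' : IsTriAttack w' E')
    (hmin : ∀ F, IsTriAttack w' F → ∑ e ∈ E', c e ≤ ∑ e ∈ F, c e) :
    (E'.card = 1 ↔
      w' s((0 : Fin 3), (1 : Fin 3)) + w' s((1 : Fin 3), (2 : Fin 3)) ≤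
        w' s((0 : Fin 3), (2 : Fin 3))) ∧
    (w' s((0 : Fin 3), (2 : Fin 3)) <
        w' s((0 : Fin 3), (1 : Fin 3)) + w' s((1 : Fin 3), (2 : Fin 3)) → E' = ∅) := by
  have hcost := hE'.sum_eq_card_mul hc1 hc2
  have hcard_le : E'.card ≤ 1 := by
    have h := hmin _ IsTriAttack.singleton_left
    rw [hcost, (IsTriAttack.singleton_left (w' := w')).sum_eq_card_mul hc1 hc2,
      Finset.card_singleton] at h
    exact_mod_cast le_of_mul_le_mul_right h hν
  have hempty : E' = ∅ ↔ w' s(0, 2) < w' s(0, 1) + w' s(1, 2) := by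
    refine ⟨fun h => IsTriAttack.empty_iff.mp (h ▸ hE'), fun hlt => ?_⟩
    have h := hmin _ (IsTriAttack.empty_iff.mpr hlt)
    rw [hcost, Finset.sum_empty] at h
    have hcard : (E'.card : ℝ) ≤ 0 := nonpos_of_mul_nonpos_left h hν
    exact Finset.card_eq_zero.mp (by exact_mod_cast hcard.antisymm E'.card.cast_nonneg)
  have hone : E'.card = 1 ↔ E'.card ≠ 0 := by omega
  exact ⟨by rw [hone, Ne, Finset.card_eq_zero, hempty, not_lt], hempty.mpr⟩

/-- In the triangle gadget, a minimum-cost attack removes exactly one of the two detour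
edges (incurring cost `ν`) iff the direct edge is at least as long as the detour;
otherwise it removes no edge of the triangle. -/
theorem stmt3 (w' : Sym2 (Fin 3) → ℝ) (hw' : ∀ e, 0 ≤ w' e) (ν : ℝ) (hν : 0 < ν)
    (c : Sym2 (Fin 3) → ℝ)
    (hc1 : c s((0 : Fin 3), (1 : Fin 3)) = ν) (hc2 : c s((1 : Fin 3), (2 : Fin 3)) = ν)
    (E' : Finset (Sym2 (Fin 3))) (hE' : IsTriAttack w' E')
    (hmin : ∀ F, IsTriAttack w' F → ∑ e ∈ E', c e ≤ ∑ e ∈ F, c e) :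
    (E'.card = 1 ↔
      w' s((0 : Fin 3), (1 : Fin 3)) + w' s((1 : Fin 3), (2 : Fin 3)) ≤
        w' s((0 : Fin 3), (2 : Fin 3))) ∧
    (w' s((0 : Fin 3), (2 : Fin 3)) <
        w' s((0 : Fin 3), (1 : Fin 3)) + w' s((1 : Fin 3), (2 : Fin 3)) → E' = ∅) :=
  stmt3_general w' ν hν c hc1 hc2 E' hE' hmin
end

section
/- In the Knapsack-reduction triangle gadget, an optimal attack never removes both edges {u_{i-1}, ω_i} and {ω_i, u_i} of the same triangle: removing both increases attack cost without eliminating any additional s–t path competing with p*. -/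
open SimpleGraph

/-- Vertices of the chain-of-triangles gadget: `Sum.inl i` is `u_i`, `Sum.inr i` is `ω_{i+1}`. -/
abbrev CV (n : ℕ) := Fin (n + 1) ⊕ Fin n

/-- The bottom edge `{u_{i-1}, u_i}` of the `i`-th triangle (on the target path). -/
def botE (n : ℕ) (i : Fin n) : Sym2 (CV n) := s(Sum.inl i.castSucc, Sum.inl i.succ)

/-- The detour edge `{u_{i-1}, ω_i}` of the `i`-th triangle. -/
def d1E (n : ℕ) (i : Fin n) : Sym2 (CV n) := s(Sum.inl i.castSucc, Sum.inr i)

/-- The detour edge `{ω_i, u_i}` of the `i`-th triangle. -/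
def d2E (n : ℕ) (i : Fin n) : Sym2 (CV n) := s(Sum.inr i, Sum.inl i.succ)

/-- The chain-of-triangles gadget graph. -/
def chainGraph (n : ℕ) : SimpleGraph (CV n) :=
  SimpleGraph.fromEdgeSet {e | ∃ i : Fin n, e = botE n i ∨ e = d1E n i ∨ e = d2E n i}

/-- Source `s = u_0`. -/
def src (n : ℕ) : CV n := Sum.inl 0

/-- Destination `t = u_n`. -/
def dst (n : ℕ) : CV n := Sum.inl (Fin.last n)

/-- An attack on the chain gadget: removable edges lie in the graph, no bottom edge
(edge of `p*`) is removed, and afterwards every simple `s`–`t` path other than the bottom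
path `p*` (i.e. any path visiting some detour vertex `ω_i`) is strictly longer than `p*`. -/
def IsChainAttack (n : ℕ) (w' : Sym2 (CV n) → ℝ) (E' : Finset (Sym2 (CV n))) : Prop :=
  ↑E' ⊆ (chainGraph n).edgeSet ∧ (∀ i : Fin n, botE n i ∉ E') ∧
    ∀ q : ((chainGraph n).deleteEdges ↑E').Walk (src n) (dst n), q.IsPath →
      (∃ i : Fin n, Sum.inr i ∈ q.support) →
      ∑ i : Fin n, w' (botE n i) < walkLen w' q

namespace SimpleGraph

variable {V : Type*} {G : SimpleGraph V}

theorem Walk.IsPath.notMem_support_of_neighborSet_subsingleton {u v x : V} {p : G.Walk u v}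
    (hp : p.IsPath) (hxu : x ≠ u) (hxv : x ≠ v) (hx : (G.neighborSet x).Subsingleton) :
    x ∉ p.support := by
  intro hmem
  obtain ⟨i, rfl, hi⟩ := p.mem_support_iff_exists_getVert.mp hmem
  have hi0 : i ≠ 0 := by rintro rfl; exact hxu p.getVert_zero
  have hilt : i < p.length := lt_of_le_of_ne hi (by rintro rfl; exact hxv p.getVert_length)
  have hsub : p.toSubgraph.neighborSet (p.getVert i) ⊆ G.neighborSet (p.getVert i) :=
    fun _ hy => p.toSubgraph.adj_sub hy
  have hle : (p.toSubgraph.neighborSet (p.getVert i)).ncard ≤ 1 :=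
    (Set.ncard_le_one p.finite_neighborSet_toSubgraph).2 fun a ha b hb => hx (hsub ha) (hsub hb)
  have := hp.ncard_neighborSet_toSubgraph_internal_eq_two hi0 hilt
  omega

theorem Walk.mem_edgeSet_deleteEdges_of_notMem_edges [DecidableEq V] {s : Finset (Sym2 V)}
    {e : Sym2 V} {u v : V} (q : (G.deleteEdges ↑(s.erase e)).Walk u v) (he : e ∉ q.edges) :
    ∀ e' ∈ q.edges, e' ∈ (G.deleteEdges ↑s).edgeSet := by
  intro e' he'
  have hq := q.edges_subset_edgeSet he'
  rw [edgeSet_deleteEdges] at hq ⊢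
  exact ⟨hq.1, fun hs => hq.2 (Finset.mem_erase.2 ⟨ne_of_mem_of_not_mem he' he, hs⟩)⟩

end SimpleGraph

lemma d1E_ne_d2E (n : ℕ) (i : Fin n) : d1E n i ≠ d2E n i := by
  simp [d1E, d2E, Fin.castSucc_lt_succ.ne]

lemma eq_d1E_or_eq_d2E_of_inr_mem {n : ℕ} {i : Fin n} {e : Sym2 (CV n)}
    (he : e ∈ (chainGraph n).edgeSet) (hi : Sum.inr i ∈ e) :
    e = d1E n i ∨ e = d2E n i := by
  rw [chainGraph, edgeSet_fromEdgeSet] at he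
  obtain ⟨⟨j, rfl | rfl | rfl⟩, -⟩ := he
  · simp [botE] at hi
  · simp only [d1E, Sym2.mem_iff, reduceCtorEq, Sum.inr.injEq, false_or] at hi
    exact .inl (hi ▸ rfl)
  · simp only [d2E, Sym2.mem_iff, reduceCtorEq, Sum.inr.injEq, or_false] at hi
    exact .inr (hi ▸ rfl)

lemma neighborSet_inr_subsingleton {n : ℕ} {i : Fin n} {F : Finset (Sym2 (CV n))}
    (h1 : d1E n i ∈ F) :
    (((chainGraph n).deleteEdges ↑F).neighborSet (Sum.inr i)).Subsingleton := by
  suffices ∀ y, ((chainGraph n).deleteEdges ↑F).Adj (Sum.inr i) y → y = Sum.inl i.succ from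
    fun y hy z hz => (this y hy).trans (this z hz).symm
  intro y hy
  rw [deleteEdges_adj] at hy
  rcases eq_d1E_or_eq_d2E_of_inr_mem hy.1 (Sym2.mem_mk_left _ _) with h | h
  · exact absurd (h ▸ h1) hy.2
  · simpa [d2E] using h

/-- Once `{u_{i-1}, ω_i}` is cut, `ω_i` is a dead end, so restoring `{ω_i, u_i}` creates no new
simple `s`–`t` path. -/
lemma IsChainAttack.erase_d2E {n : ℕ} {w' : Sym2 (CV n) → ℝ} {E' : Finset (Sym2 (CV n))}
    (hE' : IsChainAttack n w' E') {i : Fin n} (h1 : d1E n i ∈ E') :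
    IsChainAttack n w' (E'.erase (d2E n i)) := by
  obtain ⟨hsub, hbot, hpath⟩ := hE'
  refine ⟨(Finset.coe_subset.2 (E'.erase_subset _)).trans hsub,
    fun j hj => hbot j (Finset.mem_of_mem_erase hj), fun q hq hω => ?_⟩
  have hωi : (Sum.inr i : CV n) ∉ q.support :=
    hq.notMem_support_of_neighborSet_subsingleton (by simp [src]) (by simp [dst])
      (neighborSet_inr_subsingleton (Finset.mem_erase.2 ⟨d1E_ne_d2E n i, h1⟩))
  have hd2 : d2E n i ∉ q.edges := fun h => hωi (q.fst_mem_support_of_mem_edges h)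
  have hE'q := q.mem_edgeSet_deleteEdges_of_notMem_edges hd2
  simpa only [walkLen, Walk.edges_transfer, Walk.support_transfer] using
    hpath (q.transfer _ hE'q) (hq.transfer hE'q) (by simpa only [Walk.support_transfer] using hω)

theorem stmt4_general (n : ℕ) (w' c : Sym2 (CV n) → ℝ) (ν : Fin n → ℝ)
    (hν : ∀ i, 0 < ν i)
    (hc2 : ∀ i, c (d2E n i) = ν i)
    (E' : Finset (Sym2 (CV n))) (hE' : IsChainAttack n w' E')
    (hmin : ∀ F, IsChainAttack n w' F → ∑ e ∈ E', c e ≤ ∑ e ∈ F, c e) :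
    ∀ i : Fin n, ¬(d1E n i ∈ E' ∧ d2E n i ∈ E') := by
  rintro i ⟨h1, h2⟩
  have hle := hmin _ (hE'.erase_d2E h1)
  rw [← Finset.sum_erase_add E' c h2, hc2] at hle
  linarith [hν i]

/-- An optimal (minimum-cost) attack on the chain gadget never removes both detour edges
of the same triangle. -/
theorem stmt4 (n : ℕ) (w' c : Sym2 (CV n) → ℝ) (ν : Fin n → ℝ)
    (hw' : ∀ e, 0 < w' e) (hν : ∀ i, 0 < ν i)
    (hc1 : ∀ i, c (d1E n i) = ν i) (hc2 : ∀ i, c (d2E n i) = ν i)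
    (E' : Finset (Sym2 (CV n))) (hE' : IsChainAttack n w' E')
    (hmin : ∀ F, IsChainAttack n w' F → ∑ e ∈ E', c e ≤ ∑ e ∈ F, c e) :
    ∀ i : Fin n, ¬(d1E n i ∈ E' ∧ d2E n i ∈ E') :=
  stmt4_general n w' c ν hν hc2 E' hE' hmin
end

section
/- Consider the defender's cost for one triangle gadget with true weights w({u_{i-1},u_i}) = 1, w({u_{i-1},ω_i}) = 1, w({ω_i,u_i}) = η_i, marginal error costs f₊ = 1 for over-reporting and f₋ = H' > η_i for under-reporting. If the defender must publish weights making the direct edge at least as long as the detour (i.e., w'({u_{i-1},u_i}) ≥ w'({u_{i-1},ω_i}) + w'({ω_i,u_i})), then the minimum worst-case cost L_d + L_e for a user traveling from u_{i-1} to u_i equals η_i + 1, achieved by setting w'({u_{i-1},u_i}) = 1 + η_i and leaving the detour weights unperturbed; if no such constraint is imposed and no perturbation is made, the cost is 1. -/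
/-- Error cost: `f₊` per unit of over-reporting, `f₋` per unit of under-reporting. -/
noncomputable def cerr (fp fm ltrue lobs : ℝ) : ℝ :=
  if ltrue ≤ lobs then fp * (lobs - ltrue) else fm * (ltrue - lobs)

/-- Worst-case defender cost `L_d + L_e` for a user traveling from `u_{i-1}` to `u_i`
in the triangle gadget with true direct length `1` and true detour length `1 + η`,
when the published direct length is `a'` and the published detour length is `b' + d'`.
The user takes the path that is shorter under published weights (ties: worst case);
`f₊ = 1` and `f₋ = H`. -/
noncomputable def triCost (η H a' b' d' : ℝ) : ℝ :=
  if a' < b' + d' then 1 + cerr 1 H 1 a'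
  else if b' + d' < a' then (1 + η) + cerr 1 H (1 + η) (b' + d')
  else max (1 + cerr 1 H 1 a') ((1 + η) + cerr 1 H (1 + η) (b' + d'))

/-- Triangle-gadget defender cost (true weights `1, 1, η_i`; `f₊ = 1`, `f₋ = H' > η_i`):
if the defender must publish weights making the direct edge at least as long as the detour,
the minimum worst-case cost `L_d + L_e` is `η_i + 1`, achieved by publishing `1 + η_i` on
the direct edge and leaving the detour unperturbed; with no constraint and no perturbation
the cost is `1`. -/
theorem stmt6 (η H : ℝ) (hη : 0 < η) (hH : η < H) :
    (∀ a' b' d' : ℝ, 0 ≤ a' → 0 ≤ b' → 0 ≤ d' → b' + d' ≤ a' →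
        η + 1 ≤ triCost η H a' b' d') ∧
      triCost η H (1 + η) 1 η = η + 1 ∧
      triCost η H 1 1 η = 1 := by
  have hH0 : 0 < H := hη.trans hH
  have hcerr : ∀ lt lo : ℝ, 0 ≤ cerr 1 H lt lo := by
    intro lt lo
    unfold cerr
    split
    · nlinarith
    · nlinarith
  refine ⟨?_, ?_, ?_⟩
  · intro a' b' d' _ _ _ hle
    unfold triCost
    rcases lt_or_eq_of_le hle with h | h
    · rw [if_neg (not_lt.mpr hle), if_pos h]
      have := hcerr (1 + η) (b' + d')
      linarith
    · rw [if_neg (not_lt.mpr hle), if_neg (not_lt.mpr h.ge)]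
      have := hcerr (1 + η) (b' + d')
      have : η + 1 ≤ (1 + η) + cerr 1 H (1 + η) (b' + d') := by linarith
      exact this.trans (le_max_right _ _)
  · unfold triCost
    rw [if_neg (by linarith), if_neg (by linarith)]
    unfold cerr
    rw [if_pos (by linarith), if_pos (by linarith)]
    rw [max_eq_right (by linarith)]
    ring
  · unfold triCost
    rw [if_pos (by linarith)]
    unfold cerr
    rw [if_pos le_rfl]
    ring
end

section
/- If p* is the strictly longest s–t path among all simple s–t paths in G under weights w', then any edge set E' whose removal makes p* the shortest s–t path must contain at least one edge from every other simple s–t path; hence the minimum attack cost equals the minimum cost of an edge set hitting all simple s–t paths other than p* (while avoiding edges of p*). -/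
open SimpleGraph

/-- If `p*` is the strictly longest simple `s`–`t` path under `w'`, then an edge set `E'`
(avoiding edges of `p*`) makes `p*` the (weakly) shortest `s`–`t` path iff it contains at
least one edge of every other simple `s`–`t` path; hence the minimum attack cost equals
the minimum cost of an edge set hitting all simple `s`–`t` paths other than `p*`. -/
theorem stmt12 {V : Type*} [Fintype V] (G : SimpleGraph V)
    (w' : Sym2 V → ℝ) (hw' : ∀ e, 0 < w' e)
    (c : Sym2 V → ℝ) (hc : ∀ e, 0 < c e)
    (s t : V) (pstar : G.Walk s t) (hps : pstar.IsPath)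
    (hlong : ∀ q : G.Walk s t, q.IsPath → q ≠ pstar → walkLen w' q < walkLen w' pstar)
    (E' : Finset (Sym2 V)) (hsub : ↑E' ⊆ G.edgeSet)
    (hdisj : ∀ e ∈ pstar.edges, e ∉ E') :
    (∀ q : (G.deleteEdges ↑E').Walk s t, q.IsPath → walkLen w' pstar ≤ walkLen w' q) ↔
      (∀ q : G.Walk s t, q.IsPath → q ≠ pstar → ∃ e ∈ q.edges, e ∈ E') := by
  constructor
  · intro h q hq hne
    by_contra hno
    push_neg at hno
    have hsubE : ∀ e ∈ q.edges, e ∈ (G.deleteEdges (↑E' : Set (Sym2 V))).edgeSet := by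
      intro e he
      rw [edgeSet_deleteEdges]
      exact ⟨q.edges_subset_edgeSet he, hno e he⟩
    have := h (q.transfer _ hsubE) (hq.transfer hsubE)
    rw [show walkLen w' (q.transfer _ hsubE) = walkLen w' q by
      unfold walkLen; rw [Walk.edges_transfer]] at this
    exact absurd this (not_le.mpr (hlong q hq hne))
  · intro h q hq
    have hsubE : ∀ e ∈ q.edges, e ∈ G.edgeSet := by
      intro e he
      exact (edgeSet_deleteEdges (↑E' : Set (Sym2 V)) ▸ q.edges_subset_edgeSet he).1
    set q' := q.transfer G hsubE with hq'
    have hqp : q'.IsPath := hq.transfer hsubE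
    have hedges : q'.edges = q.edges := Walk.edges_transfer q hsubE
    have hlen : walkLen w' q' = walkLen w' q := by unfold walkLen; rw [hedges]
    by_cases hne : q' = pstar
    · rw [← hne, hlen]
    · exfalso
      obtain ⟨e, he, heE⟩ := h q' hqp hne
      have := q.edges_subset_edgeSet (hedges ▸ he)
      rw [edgeSet_deleteEdges] at this
      exact this.2 heE
end

section
/- Let G be a graph where every s–t path other than the direct edge e₀ = {s,t} passes through a common vertex x. Then to make any path p* through x the shortest s–t path, an attacker must remove e₀, and the minimum attack cost is exactly c(e₀) plus the minimum cost to make p* shortest in G − e₀ restricted to paths through x. -/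
open SimpleGraph

/-- An attack in this setting: a set of edges of `G`, disjoint from the edges of `p*`,
whose removal makes `p*` the strictly shortest `s`–`t` path. -/
def IsStrictAttack {V : Type*} (G : SimpleGraph V) (w : Sym2 V → ℝ) {s t : V}
    (pstar : G.Walk s t) (E' : Finset (Sym2 V)) : Prop :=
  ↑E' ⊆ G.edgeSet ∧ (∀ e ∈ pstar.edges, e ∉ E') ∧
    ∀ q : (G.deleteEdges ↑E').Walk s t, q.IsPath → q.edges ≠ pstar.edges →
      walkLen w pstar < walkLen w q

/-- If every simple `s`–`t` path other than the direct edge `e₀ = {s,t}` passes through a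
common vertex `x` lying on `p*`, then any attack must remove `e₀`, and a minimum-cost
attack costs exactly `c(e₀)` plus the minimum cost of an attack in `G − e₀` (where all
remaining `s`–`t` paths go through `x`). -/
theorem stmt16 {V : Type*} [Fintype V] [DecidableEq V] (G : SimpleGraph V)
    (w c : Sym2 V → ℝ) (hw : ∀ e, 0 < w e) (hc : ∀ e, 0 < c e)
    (s t x : V) (hst : G.Adj s t)
    (pstar : G.Walk s t) (hps : pstar.IsPath) (hx : x ∈ pstar.support)
    (hwe : w s(s, t) < walkLen w pstar)
    (hcommon : ∀ q : G.Walk s t, q.IsPath → q.edges ≠ [s(s, t)] → x ∈ q.support)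
    (E' : Finset (Sym2 V)) (hE' : IsStrictAttack G w pstar E')
    (hmin : ∀ F, IsStrictAttack G w pstar F → ∑ e ∈ E', c e ≤ ∑ e ∈ F, c e) :
    s(s, t) ∈ E' ∧
      (∑ e ∈ E', c e = c s(s, t) + ∑ e ∈ E'.erase s(s, t), c e) ∧
      ∀ F : Finset (Sym2 V), s(s, t) ∉ F →
        IsStrictAttack G w pstar (insert s(s, t) F) →
        ∑ e ∈ E'.erase s(s, t), c e ≤ ∑ e ∈ F, c e := by
  have hmem : s(s, t) ∈ E' := by
    by_contra hnot
    have hadj : (G.deleteEdges ↑E').Adj s t := by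
      rw [SimpleGraph.deleteEdges_adj]
      exact ⟨hst, hnot⟩
    let q : (G.deleteEdges ↑E').Walk s t := SimpleGraph.Walk.cons hadj SimpleGraph.Walk.nil
    have hpath : q.IsPath := by
      simp [q, SimpleGraph.Walk.isPath_def, hst.ne]
    have hqedges : q.edges = [s(s, t)] := rfl
    have hqlen : walkLen w q = w s(s, t) := by
      simp [walkLen, hqedges]
    have hne : q.edges ≠ pstar.edges := by
      intro h
      have : walkLen w pstar = w s(s, t) := by
        simp [walkLen, ← h, hqedges]
      linarith
    have := hE'.2.2 q hpath hne
    rw [hqlen] at this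
    linarith
  refine ⟨hmem, ?_, ?_⟩
  · exact (Finset.add_sum_erase E' c hmem).symm
  · intro F hF hins
    have h1 := hmin _ hins
    rw [Finset.sum_insert hF] at h1
    have h2 : ∑ e ∈ E', c e = c s(s, t) + ∑ e ∈ E'.erase s(s, t), c e :=
      (Finset.add_sum_erase E' c hmem).symm
    linarith
end
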